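/- arXiv:2605.23441 — 2 statements merged into one kernel-verified Lean document; each statement's English description precedes it below -/
import Mathlib

section
/- Let G be a right ω-balanced topological gyrogroup and U an open neighborhood of 0. Then there is a sequence {Uₙ : n ∈ ω} of open neighborhoods of 0 with: (i) U₀ ⊆ U; (ii) Uₙ = ⊖Uₙ; (iii) Uₙ₊₁ ⊕ Uₙ₊₁ ⊆ Uₙ; (iv) for each x ∈ G and n ∈ ω there exists k ∈ ω with x ⊕ (U_k ⊕ (⊖x)) ⊆ Uₙ. -/
universe u v

class Gyrogroup (G : Type u) where
  add : G → G → G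
  zero : G
  neg : G → G
  gyr : G → G → Equiv.Perm G
  zero_add : ∀ a : G, add zero a = a
  add_zero : ∀ a : G, add a zero = a
  neg_add : ∀ a : G, add (neg a) a = zero
  add_neg : ∀ a : G, add a (neg a) = zero
  gyr_hom : ∀ x y a b : G, gyr x y (add a b) = add (gyr x y a) (gyr x y b)
  gyrassoc : ∀ x y z : G, add x (add y z) = add (add x y) (gyr x y z)
  loop : ∀ x y : G, gyr (add x y) y = gyr x y

open Gyrogroup

section AuxGyro

variable {G : Type u} [Gyrogroup G]

lemma gyro_neg_zero : neg (zero : G) = zero := by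
  have h1 := add_neg (zero : G)
  rwa [Gyrogroup.zero_add] at h1

lemma gyro_left_cancel {a b c : G} (h : add a b = add a c) : b = c := by
  have h2 : add (neg a) (add a b) = add (neg a) (add a c) := by rw [h]
  rw [gyrassoc, gyrassoc, Gyrogroup.neg_add, Gyrogroup.zero_add, Gyrogroup.zero_add] at h2
  exact (gyr (neg a) a).injective h2

lemma gyro_neg_neg (a : G) : neg (neg a) = a := by
  have h : add (neg a) (neg (neg a)) = add (neg a) a := by rw [Gyrogroup.add_neg, Gyrogroup.neg_add]
  exact gyro_left_cancel h

lemma gyro_shrink [TopologicalSpace G]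
    (hcadd : Continuous fun p : G × G => add p.1 p.2)
    (hcneg : Continuous (neg : G → G))
    (W : Set G) (hW : IsOpen W) (h0 : (zero : G) ∈ W) :
    ∃ V : Set G, IsOpen V ∧ (zero : G) ∈ V ∧ neg '' V = V ∧
      ∀ a ∈ V, ∀ b ∈ V, add a b ∈ W := by
  have hpre : IsOpen ((fun p : G × G => add p.1 p.2) ⁻¹' W) := hW.preimage hcadd
  have hmem : ((zero : G), (zero : G)) ∈ (fun p : G × G => add p.1 p.2) ⁻¹' W := by
    simp only [Set.mem_preimage, Gyrogroup.zero_add]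
    exact h0
  obtain ⟨A, B, hA, hB, h0A, h0B, hAB⟩ := isOpen_prod_iff.1 hpre _ _ hmem
  refine ⟨(A ∩ B) ∩ neg ⁻¹' (A ∩ B), ?_, ?_, ?_, ?_⟩
  · exact ((hA.inter hB).inter ((hA.inter hB).preimage hcneg))
  · refine ⟨⟨h0A, h0B⟩, ?_⟩
    simp only [Set.mem_preimage, gyro_neg_zero]
    exact ⟨h0A, h0B⟩
  · ext x
    constructor
    · rintro ⟨y, ⟨hy1, hy2⟩, rfl⟩
      refine ⟨hy2, ?_⟩
      simpa only [Set.mem_preimage, gyro_neg_neg] using hy1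
    · rintro ⟨hx1, hx2⟩
      exact ⟨neg x, ⟨hx2, by simpa only [Set.mem_preimage, gyro_neg_neg] using hx1⟩,
        gyro_neg_neg x⟩
  · rintro a ⟨⟨haA, haB⟩, -⟩ b ⟨⟨hbA, hbB⟩, -⟩
    exact hAB (Set.mk_mem_prod haA hbB)

end AuxGyro

/-- History-carrying recursion. -/
def histAux {α : Type v} (base : α) (step : (ℕ → α) → ℕ → α) : ℕ → ℕ → α
  | 0 => fun _ => base
  | n + 1 => fun j => if j = n + 1 then step (histAux base step n) n else histAux base step n j

lemma histAux_coh {α : Type v} (base : α) (step : (ℕ → α) → ℕ → α) :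
    ∀ n j, j ≤ n → histAux base step n j = histAux base step j j := by
  intro n
  induction n with
  | zero => intro j hj; rw [Nat.le_zero.mp hj]
  | succ n ih =>
    intro j hj
    rcases eq_or_lt_of_le hj with h | h
    · rw [h]
    · have hj' : j ≤ n := Nat.lt_succ_iff.mp h
      have hne : j ≠ n + 1 := Nat.ne_of_lt h
      show (if j = n + 1 then step (histAux base step n) n else histAux base step n j) = _
      rw [if_neg hne]
      exact ih j hj'

/-- In a right ω-balanced topological gyrogroup, every open neighborhood U of 0
admits a sequence {Uₙ} of open neighborhoods of 0 satisfying (i)-(iv). -/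
theorem balanced_sequence {G : Type u} [Gyrogroup G] [TopologicalSpace G] [T2Space G]
    (hcadd : Continuous fun p : G × G => add p.1 p.2)
    (hcneg : Continuous (neg : G → G))
    -- right ω-balanced
    (hbal : ∀ U : Set G, IsOpen U → (zero : G) ∈ U →
      ∃ γ : Set (Set G), γ.Countable ∧ (∀ V ∈ γ, IsOpen V ∧ (zero : G) ∈ V) ∧
        ∀ x : G, ∃ V ∈ γ, ∀ v ∈ V, add x (add v (neg x)) ∈ U)
    (U : Set G) (hU : IsOpen U) (h0 : (zero : G) ∈ U) :
    ∃ Us : ℕ → Set G, (∀ n, IsOpen (Us n) ∧ (zero : G) ∈ Us n) ∧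
      -- (i)
      Us 0 ⊆ U ∧
      -- (ii)
      (∀ n, neg '' Us n = Us n) ∧
      -- (iii)
      (∀ n, ∀ a ∈ Us (n + 1), ∀ b ∈ Us (n + 1), add a b ∈ Us n) ∧
      -- (iv)
      (∀ x : G, ∀ n : ℕ, ∃ k : ℕ, ∀ v ∈ Us k, add x (add v (neg x)) ∈ Us n) := by
  classical
  -- the type of open neighborhoods of zero
  have hsh : ∀ W : {V : Set G // IsOpen V ∧ (zero : G) ∈ V},
      ∃ V : {V : Set G // IsOpen V ∧ (zero : G) ∈ V},
        neg '' V.1 = V.1 ∧ ∀ a ∈ V.1, ∀ b ∈ V.1, add a b ∈ W.1 := by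
    intro W
    obtain ⟨V, hVo, hV0, hVs, hVm⟩ := gyro_shrink hcadd hcneg W.1 W.2.1 W.2.2
    exact ⟨⟨V, hVo, hV0⟩, hVs, hVm⟩
  choose sh sh_symm sh_mul using hsh
  have hE : ∀ W : {V : Set G // IsOpen V ∧ (zero : G) ∈ V},
      ∃ e : ℕ → {V : Set G // IsOpen V ∧ (zero : G) ∈ V},
        ∀ x : G, ∃ i : ℕ, ∀ v ∈ (e i).1, add x (add v (neg x)) ∈ W.1 := by
    intro W
    obtain ⟨γ, hγc, hγop, hγcov⟩ := hbal W.1 W.2.1 W.2.2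
    obtain ⟨V0, hV0γ, -⟩ := hγcov zero
    obtain ⟨f, hf⟩ := hγc.exists_eq_range ⟨V0, hV0γ⟩
    refine ⟨fun i => ⟨f i, hγop (f i) (hf ▸ Set.mem_range_self i)⟩, ?_⟩
    intro x
    obtain ⟨V, hVγ, hV⟩ := hγcov x
    rw [hf] at hVγ
    obtain ⟨i, rfl⟩ := hVγ
    exact ⟨i, hV⟩
  choose E hEspec using hE
  set step : (ℕ → {V : Set G // IsOpen V ∧ (zero : G) ∈ V}) → ℕ →
      {V : Set G // IsOpen V ∧ (zero : G) ∈ V} := fun h n =>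
    sh ⟨(h n).1 ∩ (E (h (Nat.unpair n).1) (Nat.unpair n).2).1,
        (h n).2.1.inter (E (h (Nat.unpair n).1) (Nat.unpair n).2).2.1,
        (h n).2.2, (E (h (Nat.unpair n).1) (Nat.unpair n).2).2.2⟩ with hstep
  set base : {V : Set G // IsOpen V ∧ (zero : G) ∈ V} := sh ⟨U, hU, h0⟩ with hbase
  set F : ℕ → {V : Set G // IsOpen V ∧ (zero : G) ∈ V} :=
    fun n => histAux base step n n with hF
  -- key structural facts about F
  have hF0 : F 0 = sh ⟨U, hU, h0⟩ := rfl
  have hFsucc : ∀ n, ∃ W : {V : Set G // IsOpen V ∧ (zero : G) ∈ V},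
      F (n + 1) = sh W ∧ W.1 ⊆ (F n).1 ∧
        W.1 ⊆ (E (F (Nat.unpair n).1) (Nat.unpair n).2).1 := by
    intro n
    have hcoh : histAux base step n (Nat.unpair n).1
        = histAux base step (Nat.unpair n).1 (Nat.unpair n).1 :=
      histAux_coh base step n _ (Nat.unpair_left_le n)
    refine ⟨⟨(histAux base step n n).1 ∩
        (E (histAux base step n (Nat.unpair n).1) (Nat.unpair n).2).1, ?_, ?_⟩, ?_, ?_, ?_⟩
    · exact (histAux base step n n).2.1.inter
        (E (histAux base step n (Nat.unpair n).1) (Nat.unpair n).2).2.1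
    · exact ⟨(histAux base step n n).2.2,
        (E (histAux base step n (Nat.unpair n).1) (Nat.unpair n).2).2.2⟩
    · show (if n + 1 = n + 1 then step (histAux base step n) n
          else histAux base step n (n + 1)) = _
      rw [if_pos rfl]
    · exact Set.inter_subset_left
    · intro a ha
      have := ha.2
      rwa [hcoh] at this
  have hform : ∀ n, ∃ W, F n = sh W := by
    intro n
    cases n with
    | zero => exact ⟨⟨U, hU, h0⟩, hF0⟩
    | succ n =>
      obtain ⟨W, hW, -, -⟩ := hFsucc n
      exact ⟨W, hW⟩
  refine ⟨fun n => (F n).1, fun n => (F n).2, ?_, ?_, ?_, ?_⟩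
  · -- (i)
    intro a ha
    simp only at ha ⊢
    rw [hF0] at ha
    have := sh_mul _ a ha zero (sh ⟨U, hU, h0⟩).2.2
    rwa [Gyrogroup.add_zero] at this
  · -- (ii)
    intro n
    obtain ⟨W, hW⟩ := hform n
    show neg '' (F n).1 = (F n).1
    rw [hW]
    exact sh_symm W
  · -- (iii)
    intro n a ha b hb
    simp only at ha hb ⊢
    obtain ⟨W, hW, hWsub, -⟩ := hFsucc n
    rw [hW] at ha hb
    exact hWsub (sh_mul W a ha b hb)
  · -- (iv)
    intro x n
    obtain ⟨i, hi⟩ := hEspec (F n) x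
    refine ⟨Nat.pair n i + 1, ?_⟩
    intro v hv
    simp only at hv ⊢
    obtain ⟨W, hW, -, hWE⟩ := hFsucc (Nat.pair n i)
    rw [hW] at hv
    have hvW : v ∈ W.1 := by
      have := sh_mul W v hv zero (sh W).2.2
      rwa [Gyrogroup.add_zero] at this
    have hvE := hWE hvW
    rw [Nat.unpair_pair] at hvE
    exact hi v hvE
end

section
/- Let G be a strongly topological gyrogroup that is range-metrizable. Then the right invariance number of G is countable: for every open neighborhood U of the identity 0 there exists a countable family γ of open neighborhoods of 0 such that for each x ∈ G there is O ∈ γ with x ⊕ (O ⊕ (⊖x)) ⊆ U. -/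
universe u v

open Gyrogroup

/-- A bundled topological gyrogroup (carrier, topology, gyrogroup structure). -/
structure TopGyro : Type (u + 1) where
  carrier : Type u
  top : TopologicalSpace carrier
  gyro : Gyrogroup carrier

instance (K : TopGyro.{u}) : TopologicalSpace K.carrier := K.top
instance (K : TopGyro.{u}) : Gyrogroup K.carrier := K.gyro


lemma Gyrogroup.left_cancel {G : Type u} [Gyrogroup G] {a x y : G}
    (h : add a x = add a y) : x = y := by
  have h1 : ∀ z : G, add (neg a) (add a z) = gyr (neg a) a z := fun z => by
    rw [gyrassoc, neg_add, zero_add]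
  have h2 := congrArg (add (neg a)) h
  rw [h1, h1] at h2
  exact (gyr (neg a) a).injective h2

lemma Gyrogroup.hom_zero {G : Type u} {H : Type v} [Gyrogroup G] [Gyrogroup H]
    {p : G → H} (hp : ∀ x y : G, p (add x y) = add (p x) (p y)) :
    p zero = zero := by
  have : add (p zero) (p zero) = add (p zero) zero := by
    rw [← hp, add_zero, add_zero]
  exact Gyrogroup.left_cancel this

lemma Gyrogroup.hom_neg {G : Type u} {H : Type v} [Gyrogroup G] [Gyrogroup H]
    {p : G → H} (hp : ∀ x y : G, p (add x y) = add (p x) (p y)) (x : G) :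
    p (neg x) = neg (p x) := by
  have : add (p x) (p (neg x)) = add (p x) (neg (p x)) := by
    rw [← hp, add_neg, Gyrogroup.hom_zero hp, add_neg]
  exact Gyrogroup.left_cancel this

/-- A range-metrizable strongly topological gyrogroup has countable right invariance
number: rinv(G) ≤ ω. -/
theorem range_metrizable_rinv {G : Type u} [Gyrogroup G] [TopologicalSpace G] [T2Space G]
    (hcadd : Continuous fun p : G × G => add p.1 p.2)
    (hcneg : Continuous (neg : G → G))
    -- strongly topological: a symmetric, gyr-invariant neighborhood base μ at 0
    (μ : Set (Set G))
    (hopen : ∀ U ∈ μ, IsOpen U ∧ (zero : G) ∈ U)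
    (hbase : ∀ V : Set G, IsOpen V → (zero : G) ∈ V → ∃ U ∈ μ, U ⊆ V)
    (hsym : ∀ U ∈ μ, ∀ x ∈ U, neg x ∈ U)
    (hgyrμ : ∀ U ∈ μ, ∀ x y : G, (gyr x y) '' U = U)
    -- range-metrizable
    (hrm : ∀ U : Set G, IsOpen U → (zero : G) ∈ U →
      ∃ M : TopGyro.{u},
        TopologicalSpace.MetrizableSpace M.carrier ∧
        (Continuous fun p : M.carrier × M.carrier => add p.1 p.2) ∧
        (Continuous (neg : M.carrier → M.carrier)) ∧
        ∃ p : G → M.carrier, Continuous p ∧ Function.Surjective p ∧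
          (∀ x y : G, p (add x y) = add (p x) (p y)) ∧
          ∃ V : Set M.carrier, IsOpen V ∧ (zero : M.carrier) ∈ V ∧ p ⁻¹' V ⊆ U) :
    -- conclusion: rinv(G) ≤ ω
    ∀ U : Set G, IsOpen U → (zero : G) ∈ U →
      ∃ γ : Set (Set G), γ.Countable ∧ (∀ O ∈ γ, IsOpen O ∧ (zero : G) ∈ O) ∧
        ∀ x : G, ∃ O ∈ γ, ∀ o ∈ O, add x (add o (neg x)) ∈ U := by
  intro U hU h0U
  obtain ⟨M, hMet, hMadd, hMneg, p, hpc, hps, hp, V, hVopen, hV0, hVU⟩ := hrm U hU h0U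
  letI := hMet
  letI : MetricSpace M.carrier := TopologicalSpace.metrizableSpaceMetric M.carrier
  obtain ⟨b, hb⟩ := Filter.exists_antitone_basis (nhds (zero : M.carrier))
  refine ⟨Set.range (fun n : ℕ => p ⁻¹' interior (b n)), Set.countable_range _, ?_, ?_⟩
  · rintro O ⟨n, rfl⟩
    refine ⟨(isOpen_interior).preimage hpc, ?_⟩
    have hbn : b n ∈ nhds (zero : M.carrier) := hb.1.mem_of_mem trivial
    have : (zero : M.carrier) ∈ interior (b n) := mem_interior_iff_mem_nhds.2 hbn
    simpa [Set.mem_preimage, Gyrogroup.hom_zero hp] using this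
  · intro x
    set y := p x with hy
    have hfc : Continuous (fun m : M.carrier => add y (add m (neg y))) := by
      exact hMadd.comp (continuous_const.prodMk
        (hMadd.comp (continuous_id.prodMk continuous_const)))
    have hf0 : add y (add (zero : M.carrier) (neg y)) ∈ V := by
      rw [Gyrogroup.zero_add, Gyrogroup.add_neg]; exact hV0
    have hnhds : (fun m : M.carrier => add y (add m (neg y))) ⁻¹' V
        ∈ nhds (zero : M.carrier) :=
      hfc.continuousAt.preimage_mem_nhds (hVopen.mem_nhds hf0)
    obtain ⟨n, -, hn⟩ := hb.1.mem_iff.1 hnhds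
    refine ⟨p ⁻¹' interior (b n), ⟨n, rfl⟩, ?_⟩
    intro o ho
    apply hVU
    have hob : p o ∈ b n := interior_subset ho
    have := hn hob
    simp only [Set.mem_preimage] at this ⊢
    rw [hp, hp, Gyrogroup.hom_neg hp]
    exact this
end
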